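/- Fix $P > 0$ and $n \geq 3$, and let $S = \{(z_1, \ldots, z_n) \in D^n : \sum_{k=1}^n d(z_k, z_{k+1}) = P\}$. Then the continuous function $A(z_1, \ldots, z_n) = \sum_{k=1}^{n} 2\arctan\left(\frac{\operatorname{Im}(\bar{z}_k z_{k+1})}{\operatorname{Re}(1 - \bar{z}_k z_{k+1})}\right)$ attains its supremum on $S$. -/

import Mathlib

/-!
Area and perimeter are both invariant under the disc automorphisms `z ↦ (z - a) / (1 - ā z)`:
distances are preserved exactly, while each area term `-2 arg (1 - z̄ₖ zₖ₊₁)` changes by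
`2 arg (1 - ā zₖ₊₁) - 2 arg (1 - ā zₖ)`, which telescopes around the closed polygon. So it suffices
to maximize over polygons with `z₀ = 0`, and these form a compact set: by the identity
`(1 - ρ²) |1 - z̄ w|² = (1 - |z|²) (1 - |w|²)` for the pseudo-hyperbolic distance `ρ` of `z`, `w`,
a side of hyperbolic length at most `P` shrinks `1 - |z|` by at most the factor
`(1 - tanh (P / 2)) / 4`, so every vertex stays in a fixed closed disc of radius less than `1`.
-/

open Complex ComplexConjugate

/-- Inverse hyperbolic tangent: `Tanh⁻¹ x = (1/2) ln((1+x)/(1-x))`. -/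
noncomputable def artanh (x : ℝ) : ℝ := Real.log ((1 + x) / (1 - x)) / 2

/-- Poincaré hyperbolic distance on the open unit disc. -/
noncomputable def hypDist (z w : ℂ) : ℝ :=
  2 * artanh (‖(w - z) / (1 - conj z * w)‖)

/-- Hyperbolic area of the polygon with vertices `z 0, …, z (n-1)`. -/
noncomputable def hypArea (n : ℕ) [NeZero n] (z : Fin n → ℂ) : ℝ :=
  ∑ k : Fin n, 2 * Real.arctan ((conj (z k) * z (k + 1)).im / (1 - conj (z k) * z (k + 1)).re)

lemma artanh_eq_real_artanh {x : ℝ} (hx : x ∈ Set.Icc (-1) 1) : artanh x = Real.artanh x := by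
  rw [Real.artanh_eq_half_log hx, artanh]
  ring

lemma continuousAt_artanh {x : ℝ} (hx : x ∈ Set.Ioo (-1) 1) : ContinuousAt artanh x := by
  have : 1 - x ≠ 0 := by linarith [hx.2]
  have : (1 + x) / (1 - x) ≠ 0 := (div_pos (by linarith [hx.1]) (by linarith [hx.2])).ne'
  unfold artanh
  fun_prop (disch := assumption)

lemma Real.Angle.eq_of_coe_eq_of_abs_sub_lt {x y : ℝ} (h : (x : Real.Angle) = y)
    (hxy : |x - y| < 2 * Real.pi) : x = y := by
  obtain ⟨k, hk⟩ := Real.Angle.angle_eq_iff_two_pi_dvd_sub.mp h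
  rw [hk, abs_mul, abs_of_pos Real.two_pi_pos, mul_lt_iff_lt_one_right Real.two_pi_pos] at hxy
  have : k = 0 := Int.abs_lt_one_iff.mp (by exact_mod_cast hxy)
  rw [this, Int.cast_zero, mul_zero, sub_eq_zero] at hk
  exact hk

noncomputable def mobius (a z : ℂ) : ℂ := (z - a) / (1 - conj a * z)

section Disc

variable {a z w : ℂ}

lemma norm_conj_mul_lt_one (hz : ‖z‖ < 1) (hw : ‖w‖ < 1) : ‖conj z * w‖ < 1 := by
  rw [norm_mul, Complex.norm_conj]
  exact mul_lt_one_of_nonneg_of_lt_one_left (norm_nonneg z) hz hw.le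

lemma re_one_sub_conj_mul_pos (hz : ‖z‖ < 1) (hw : ‖w‖ < 1) : 0 < (1 - conj z * w).re := by
  have := (re_le_norm (conj z * w)).trans_lt (norm_conj_mul_lt_one hz hw)
  rw [sub_re, one_re]
  linarith

lemma one_sub_conj_mul_ne_zero (hz : ‖z‖ < 1) (hw : ‖w‖ < 1) : 1 - conj z * w ≠ 0 :=
  fun h ↦ by simpa [h] using re_one_sub_conj_mul_pos hz hw

lemma normSq_one_sub_conj_mul_sub_normSq_sub (a z : ℂ) :
    normSq (1 - conj a * z) - normSq (z - a) = (1 - normSq a) * (1 - normSq z) := by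
  simp only [normSq_apply, sub_re, sub_im, mul_re, mul_im, conj_re, conj_im, one_re, one_im]
  ring

lemma one_sub_norm_mobius_sq_mul (ha : ‖a‖ < 1) (hz : ‖z‖ < 1) :
    (1 - ‖mobius a z‖ ^ 2) * ‖1 - conj a * z‖ ^ 2 = (1 - ‖a‖ ^ 2) * (1 - ‖z‖ ^ 2) := by
  have hd : ‖1 - conj a * z‖ ^ 2 ≠ 0 := by simp [one_sub_conj_mul_ne_zero ha hz]
  rw [mobius, norm_div, div_pow, sub_mul, div_mul_cancel₀ _ hd]
  simp only [Complex.sq_norm]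
  linear_combination normSq_one_sub_conj_mul_sub_normSq_sub a z

lemma norm_mobius_lt_one (ha : ‖a‖ < 1) (hz : ‖z‖ < 1) : ‖mobius a z‖ < 1 := by
  have key := one_sub_norm_mobius_sq_mul ha hz
  have hd : 0 < ‖1 - conj a * z‖ ^ 2 := by simp [one_sub_conj_mul_ne_zero ha hz]
  have hpos : 0 < (1 - ‖a‖ ^ 2) * (1 - ‖z‖ ^ 2) := by
    apply mul_pos <;> nlinarith [norm_nonneg a, norm_nonneg z]
  have : ‖mobius a z‖ ^ 2 < 1 := by nlinarith
  exact (sq_lt_one_iff₀ (norm_nonneg _)).mp this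

lemma mobius_sub_mobius (ha : ‖a‖ < 1) (hz : ‖z‖ < 1) (hw : ‖w‖ < 1) :
    mobius a w - mobius a z
      = ((1 - ‖a‖ ^ 2 : ℝ) : ℂ) * (w - z) / ((1 - conj a * z) * (1 - conj a * w)) := by
  have hz' := one_sub_conj_mul_ne_zero ha hz
  have hw' := one_sub_conj_mul_ne_zero ha hw
  rw [mobius, mobius, div_sub_div _ _ hw' hz', ofReal_sub, ofReal_pow, ofReal_one,
    ← conj_mul']
  ring

lemma one_sub_conj_mobius_mul_mobius (ha : ‖a‖ < 1) (hz : ‖z‖ < 1) (hw : ‖w‖ < 1) :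
    1 - conj (mobius a z) * mobius a w
      = ((1 - ‖a‖ ^ 2 : ℝ) : ℂ) * (1 - conj z * w)
        / (conj (1 - conj a * z) * (1 - conj a * w)) := by
  have hz' : conj (1 - conj a * z) ≠ 0 := (map_ne_zero _).mpr (one_sub_conj_mul_ne_zero ha hz)
  have hw' := one_sub_conj_mul_ne_zero ha hw
  rw [mobius, mobius, map_div₀, div_mul_div_comm, one_sub_div (mul_ne_zero hz' hw'), ofReal_sub,
    ofReal_pow, ofReal_one, ← conj_mul']
  simp only [map_sub, map_mul, map_one, conj_conj]
  ring

lemma hypDist_mobius (ha : ‖a‖ < 1) (hz : ‖z‖ < 1) (hw : ‖w‖ < 1) :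
    hypDist (mobius a z) (mobius a w) = hypDist z w := by
  have hz' := one_sub_conj_mul_ne_zero ha hz
  have ha' : (1 : ℂ) - ‖a‖ ^ 2 ≠ 0 := by
    norm_cast; nlinarith [norm_nonneg a]
  have key : (mobius a w - mobius a z) / (1 - conj (mobius a z) * mobius a w)
      = (w - z) / (1 - conj z * w) * (conj (1 - conj a * z) / (1 - conj a * z)) := by
    rw [mobius_sub_mobius ha hz hw, one_sub_conj_mobius_mul_mobius ha hz hw]
    have hzw := one_sub_conj_mul_ne_zero hz hw
    have hw' := one_sub_conj_mul_ne_zero ha hw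
    rw [div_div_div_eq, div_mul_div_comm, div_eq_div_iff (by simp [*]) (by simp [*])]
    ring
  rw [hypDist, hypDist, key, norm_mul, norm_div (conj _), norm_conj,
    div_self (norm_ne_zero_iff.mpr hz'), mul_one]

lemma abs_arg_one_sub_conj_mul_lt (hz : ‖z‖ < 1) (hw : ‖w‖ < 1) :
    |arg (1 - conj z * w)| < Real.pi / 2 :=
  abs_arg_lt_pi_div_two_iff.mpr (Or.inl (re_one_sub_conj_mul_pos hz hw))

lemma arg_one_sub_conj_mobius_mul_mobius (ha : ‖a‖ < 1) (hz : ‖z‖ < 1) (hw : ‖w‖ < 1) :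
    arg (1 - conj (mobius a z) * mobius a w)
      = arg (1 - conj z * w) + arg (1 - conj a * z) - arg (1 - conj a * w) := by
  have hr : 0 < 1 - ‖a‖ ^ 2 := by nlinarith [norm_nonneg a]
  have hz' : conj (1 - conj a * z) ≠ 0 := (map_ne_zero _).mpr (one_sub_conj_mul_ne_zero ha hz)
  have hw' := one_sub_conj_mul_ne_zero ha hw
  -- all four arguments lie in `(-π/2, π/2)`, so equality modulo `2π` is equality of reals
  refine Real.Angle.eq_of_coe_eq_of_abs_sub_lt ?_ ?_
  · rw [one_sub_conj_mobius_mul_mobius ha hz hw, mul_div_assoc, arg_real_mul _ hr,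
      arg_div_coe_angle (one_sub_conj_mul_ne_zero hz hw) (mul_ne_zero hz' hw'),
      arg_mul_coe_angle hz' hw', arg_conj_coe_angle, Real.Angle.coe_sub, Real.Angle.coe_add]
    abel
  · have h₀ := abs_lt.mp (abs_arg_one_sub_conj_mul_lt (norm_mobius_lt_one ha hz)
      (norm_mobius_lt_one ha hw))
    have h₁ := abs_lt.mp (abs_arg_one_sub_conj_mul_lt hz hw)
    have h₂ := abs_lt.mp (abs_arg_one_sub_conj_mul_lt ha hz)
    have h₃ := abs_lt.mp (abs_arg_one_sub_conj_mul_lt ha hw)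
    rw [abs_lt]
    constructor <;> linarith

lemma arg_eq_arctan_of_re_pos {x : ℂ} (hx : 0 < x.re) : arg x = Real.arctan (x.im / x.re) := by
  obtain ⟨h₁, h₂⟩ := abs_lt.mp (abs_arg_lt_pi_div_two_iff.mpr (Or.inl hx))
  rw [← tan_arg, Real.arctan_tan h₁ h₂]

lemma two_mul_arctan_eq_neg_two_mul_arg (hz : ‖z‖ < 1) (hw : ‖w‖ < 1) :
    2 * Real.arctan ((conj z * w).im / (1 - conj z * w).re) = -2 * arg (1 - conj z * w) := by
  rw [arg_eq_arctan_of_re_pos (re_one_sub_conj_mul_pos hz hw), sub_im, one_im, zero_sub,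
    neg_div, Real.arctan_neg]
  ring

lemma hypDist_nonneg (hz : ‖z‖ < 1) (hw : ‖w‖ < 1) : 0 ≤ hypDist z w := by
  have := norm_mobius_lt_one hz hw
  rw [hypDist, ← mobius, artanh_eq_real_artanh ⟨by linarith [norm_nonneg (mobius z w)], this.le⟩]
  exact mul_nonneg zero_le_two (Real.artanh_nonneg (norm_nonneg _))

lemma norm_mobius_le_tanh (hz : ‖z‖ < 1) (hw : ‖w‖ < 1) {P : ℝ} (h : hypDist z w ≤ P) :
    ‖mobius z w‖ ≤ Real.tanh (P / 2) := by
  have hρ : ‖mobius z w‖ ∈ Set.Ioo (-1) 1 :=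
    ⟨by linarith [norm_nonneg (mobius z w)], norm_mobius_lt_one hz hw⟩
  have ht : Real.tanh (P / 2) ∈ Set.Ioo (-1) 1 := ⟨Real.neg_one_lt_tanh _, Real.tanh_lt_one _⟩
  rw [← Real.artanh_le_artanh_iff hρ ht, Real.artanh_tanh,
    ← artanh_eq_real_artanh (Set.Ioo_subset_Icc_self hρ)]
  change 2 * artanh ‖mobius z w‖ ≤ P at h
  linarith

lemma one_sub_norm_mul_one_sub_norm_mobius_le (hz : ‖z‖ < 1) (hw : ‖w‖ < 1) :
    (1 - ‖z‖) * (1 - ‖mobius z w‖) ≤ 4 * (1 - ‖w‖) := by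
  have key := one_sub_norm_mobius_sq_mul hz hw
  have hρ := norm_mobius_lt_one hz hw
  have hN : 1 - ‖z‖ ≤ ‖1 - conj z * w‖ := by
    have := norm_sub_norm_le 1 (conj z * w)
    rw [norm_one, norm_mul, norm_conj] at this
    nlinarith [norm_nonneg z, norm_nonneg w]
  have h0 : 0 < 1 - ‖z‖ := by linarith
  have hp : 1 - ‖mobius z w‖ ≤ 1 - ‖mobius z w‖ ^ 2 := by nlinarith [norm_nonneg (mobius z w)]
  have h4 : (1 + ‖z‖) * (1 + ‖w‖) ≤ 4 := by nlinarith [norm_nonneg z]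
  refine le_of_mul_le_mul_left ?_ h0
  calc (1 - ‖z‖) * ((1 - ‖z‖) * (1 - ‖mobius z w‖))
      = (1 - ‖z‖) ^ 2 * (1 - ‖mobius z w‖) := by ring
    _ ≤ ‖1 - conj z * w‖ ^ 2 * (1 - ‖mobius z w‖ ^ 2) :=
        mul_le_mul (pow_le_pow_left₀ h0.le hN 2) hp (by linarith) (sq_nonneg _)
    _ = ((1 - ‖z‖) * (1 - ‖w‖)) * ((1 + ‖z‖) * (1 + ‖w‖)) := by rw [mul_comm, key]; ring
    _ ≤ ((1 - ‖z‖) * (1 - ‖w‖)) * 4 :=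
        mul_le_mul_of_nonneg_left h4 (mul_nonneg h0.le (by linarith))
    _ = (1 - ‖z‖) * (4 * (1 - ‖w‖)) := by ring

end Disc

lemma hypArea_eq_sum_arg {n : ℕ} [NeZero n] {z : Fin n → ℂ} (hz : ∀ k, ‖z k‖ < 1) :
    hypArea n z = ∑ k, -2 * arg (1 - conj (z k) * z (k + 1)) :=
  Finset.sum_congr rfl fun k _ ↦ two_mul_arctan_eq_neg_two_mul_arg (hz k) (hz (k + 1))

lemma hypArea_mobius {n : ℕ} [NeZero n] {a : ℂ} (ha : ‖a‖ < 1) {z : Fin n → ℂ}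
    (hz : ∀ k, ‖z k‖ < 1) : hypArea n (fun k ↦ mobius a (z k)) = hypArea n z := by
  have hshift : ∑ k, arg (1 - conj a * z (k + 1)) = ∑ k, arg (1 - conj a * z k) :=
    Equiv.sum_comp (Equiv.addRight 1) fun k ↦ arg (1 - conj a * z k)
  rw [hypArea_eq_sum_arg (fun k ↦ norm_mobius_lt_one ha (hz k)), hypArea_eq_sum_arg hz]
  simp only [arg_one_sub_conj_mobius_mul_mobius ha (hz _) (hz _), mul_sub, mul_add,
    Finset.sum_sub_distrib, Finset.sum_add_distrib, ← Finset.mul_sum, hshift]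
  ring

noncomputable def hypPerimeter (n : ℕ) [NeZero n] (z : Fin n → ℂ) : ℝ :=
  ∑ k, hypDist (z k) (z (k + 1))

lemma hypPerimeter_mobius {n : ℕ} [NeZero n] {a : ℂ} (ha : ‖a‖ < 1) {z : Fin n → ℂ}
    (hz : ∀ k, ‖z k‖ < 1) : hypPerimeter n (fun k ↦ mobius a (z k)) = hypPerimeter n z :=
  Finset.sum_congr rfl fun k _ ↦ hypDist_mobius ha (hz k) (hz (k + 1))

lemma Fin.pow_mul_le_of_forall_mul_le_succ {α : Type*} [Semiring α] [PartialOrder α]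
    [IsOrderedRing α] {m : ℕ} {q : α} (hq : 0 ≤ q) {s : Fin (m + 1) → α}
    (h : ∀ i : Fin m, q * s i.castSucc ≤ s i.succ) (k : Fin (m + 1)) :
    q ^ (k : ℕ) * s 0 ≤ s k := by
  induction k using Fin.induction with
  | zero => simp
  | succ i ih =>
    calc q ^ (i.succ : ℕ) * s 0 = q * (q ^ (i : ℕ) * s 0) := by
          rw [Fin.val_succ, pow_succ', mul_assoc]
      _ ≤ q * s i.castSucc := mul_le_mul_of_nonneg_left ih hq
      _ ≤ s i.succ := h i

lemma hypDist_le_hypPerimeter {n : ℕ} [NeZero n] {z : Fin n → ℂ} (hz : ∀ k, ‖z k‖ < 1)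
    (k : Fin n) : hypDist (z k) (z (k + 1)) ≤ hypPerimeter n z :=
  Finset.single_le_sum (fun j _ ↦ hypDist_nonneg (hz j) (hz (j + 1))) (Finset.mem_univ k)

lemma pow_le_one_sub_norm_of_hypPerimeter_le {n : ℕ} [NeZero n] {P : ℝ} {z : Fin n → ℂ}
    (hz : ∀ k, ‖z k‖ < 1) (hz₀ : z 0 = 0) (hP : hypPerimeter n z ≤ P) (k : Fin n) :
    ((1 - Real.tanh (P / 2)) / 4) ^ n ≤ 1 - ‖z k‖ := by
  obtain ⟨m, rfl⟩ := Nat.exists_eq_add_one_of_ne_zero (NeZero.ne n)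
  set q := (1 - Real.tanh (P / 2)) / 4 with hq
  have hq₀ : 0 ≤ q := by linarith [Real.tanh_lt_one (P / 2)]
  have hq₁ : q ≤ 1 := by linarith [Real.neg_one_lt_tanh (P / 2)]
  have hstep : ∀ i : Fin m, q * (1 - ‖z i.castSucc‖) ≤ 1 - ‖z i.succ‖ := by
    intro i
    have hρ := norm_mobius_le_tanh (hz _) (hz _)
      ((hypDist_le_hypPerimeter hz i.castSucc).trans hP)
    have := one_sub_norm_mul_one_sub_norm_mobius_le (hz i.castSucc) (hz (i.castSucc + 1))
    rw [Fin.coeSucc_eq_succ] at hρ this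
    have := mul_le_mul_of_nonneg_left (sub_le_sub_left hρ 1) (sub_nonneg.mpr (hz i.castSucc).le)
    rw [hq]
    linarith
  calc q ^ (m + 1) ≤ q ^ (k : ℕ) := pow_le_pow_of_le_one hq₀ hq₁ k.is_lt.le
    _ = q ^ (k : ℕ) * (1 - ‖z 0‖) := by simp [hz₀]
    _ ≤ 1 - ‖z k‖ :=
      Fin.pow_mul_le_of_forall_mul_le_succ (s := fun k ↦ 1 - ‖z k‖) hq₀ hstep k

lemma continuousOn_hypPerimeter (n : ℕ) [NeZero n] :
    ContinuousOn (hypPerimeter n) {z | ∀ k, ‖z k‖ < 1} := by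
  refine continuousOn_of_forall_continuousAt fun z hz ↦ ?_
  unfold hypPerimeter hypDist
  have h₁ : ∀ k, ContinuousAt artanh ‖(z (k + 1) - z k) / (1 - conj (z k) * z (k + 1))‖ :=
    fun k ↦ continuousAt_artanh
      ⟨neg_one_lt_zero.trans_le (norm_nonneg _), norm_mobius_lt_one (hz k) (hz (k + 1))⟩
  have h₂ : ∀ k, 1 - conj (z k) * z (k + 1) ≠ 0 := fun k ↦
    one_sub_conj_mul_ne_zero (hz k) (hz (k + 1))
  fun_prop (disch := first | exact h₁ _ | exact h₂ _)

lemma continuousOn_hypArea (n : ℕ) [NeZero n] :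
    ContinuousOn (hypArea n) {z | ∀ k, ‖z k‖ < 1} := by
  refine continuousOn_of_forall_continuousAt fun z hz ↦ ?_
  have h : ∀ k, (1 - conj (z k) * z (k + 1)).re ≠ 0 := fun k ↦
    (re_one_sub_conj_mul_pos (hz k) (hz (k + 1))).ne'
  unfold hypArea
  fun_prop (disch := exact h _)

lemma isCompact_hypPerimeter_eq_of_apply_zero (n : ℕ) [NeZero n] (P : ℝ) :
    IsCompact {z : Fin n → ℂ | (∀ k, ‖z k‖ < 1) ∧ z 0 = 0 ∧ hypPerimeter n z = P} := by
  set r := 1 - ((1 - Real.tanh (P / 2)) / 4) ^ n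
  have hr : r < 1 := by
    have : 0 < (1 - Real.tanh (P / 2)) / 4 := by linarith [Real.tanh_lt_one (P / 2)]
    linarith [pow_pos this n]
  set B := Set.univ.pi fun _ : Fin n ↦ Metric.closedBall (0 : ℂ) r
  have hBc : IsCompact B := isCompact_univ_pi fun _ ↦ isCompact_closedBall 0 r
  have hB : B ⊆ {z | ∀ k, ‖z k‖ < 1} := fun z hz k ↦
    (mem_closedBall_zero_iff.mp (hz k (Set.mem_univ k))).trans_lt hr
  have heq : {z : Fin n → ℂ | (∀ k, ‖z k‖ < 1) ∧ z 0 = 0 ∧ hypPerimeter n z = P}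
      = (B ∩ hypPerimeter n ⁻¹' {P}) ∩ {z | z 0 = 0} := by
    ext z
    constructor
    · rintro ⟨hz, hz₀, hzP⟩
      refine ⟨⟨fun k _ ↦ mem_closedBall_zero_iff.mpr ?_, hzP⟩, hz₀⟩
      linarith [pow_le_one_sub_norm_of_hypPerimeter_le hz hz₀ hzP.le k]
    · rintro ⟨⟨hzB, hzP⟩, hz₀⟩
      exact ⟨hB hzB, hz₀, hzP⟩
  rw [heq]
  refine hBc.of_isClosed_subset (IsClosed.inter ?_ ?_) fun z hz ↦ hz.1.1
  · exact ((continuousOn_hypPerimeter n).mono hB).preimage_isClosed_of_isClosed hBc.isClosed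
      isClosed_singleton
  · exact isClosed_eq (continuous_apply 0) continuous_const

lemma exists_hypPerimeter_eq_of_apply_zero {n : ℕ} [NeZero n] (hn : 2 ≤ n) {P : ℝ} (hP : 0 ≤ P) :
    ∃ z : Fin n → ℂ, (∀ k, ‖z k‖ < 1) ∧ z 0 = 0 ∧ hypPerimeter n z = P := by
  have h01 : (0 : Fin n) ≠ 1 := by
    simp [Fin.ext_iff, Nat.mod_eq_of_lt (by omega : 1 < n)]
  have ht₀ : 0 ≤ Real.tanh (P / 4) := by
    rw [Real.tanh_eq_sinh_div_cosh]
    exact div_nonneg (Real.sinh_nonneg_iff.mpr (by linarith)) (Real.cosh_pos _).le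
  set t := Real.tanh (P / 4)
  have hnorm : ‖(t : ℂ)‖ = t := by rw [norm_real, Real.norm_of_nonneg ht₀]
  have hart : artanh t = P / 4 := by
    rw [artanh_eq_real_artanh ⟨by linarith, (Real.tanh_lt_one _).le⟩, Real.artanh_tanh]
  have hsucc : ∀ k : Fin n, k ≠ 0 → k + 1 ≠ 1 := fun k hk h ↦ hk (add_eq_right.mp h)
  refine ⟨Pi.single 1 (t : ℂ), fun k ↦ ?_, Pi.single_eq_of_ne h01 _, ?_⟩
  · rcases eq_or_ne k 1 with rfl | hk
    · rw [Pi.single_eq_same, hnorm]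
      exact Real.tanh_lt_one _
    · simp [hk]
  · rw [hypPerimeter, Fintype.sum_eq_add 0 1 h01]
    · simp [Pi.single_eq_of_ne, h01, hsucc 1 h01.symm, hypDist, abs_of_nonneg ht₀, hart]
      ring
    · rintro k ⟨hk0, hk1⟩
      simp [hk1, hsucc k hk0, hypDist, artanh]

theorem stmt_18 (n : ℕ) [NeZero n] (hn : 3 ≤ n) (P : ℝ) (hP : 0 < P)
    (S : Set (Fin n → ℂ))
    (hS : S = {z | (∀ k, ‖z k‖ < 1) ∧
      ∑ k : Fin n, hypDist (z k) (z (k + 1)) = P}) :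
    ∃ r ∈ S, ∀ s ∈ S, hypArea n s ≤ hypArea n r := by
  subst hS
  obtain ⟨r, ⟨hr, -, hrP⟩, hmax⟩ :=
    (isCompact_hypPerimeter_eq_of_apply_zero n P).exists_isMaxOn
      (exists_hypPerimeter_eq_of_apply_zero (by omega) hP.le)
      ((continuousOn_hypArea n).mono fun z hz ↦ hz.1)
  refine ⟨r, ⟨hr, hrP⟩, fun s ⟨hs, hsP⟩ ↦ ?_⟩
  have hs₀ : ∀ k, ‖mobius (s 0) (s k)‖ < 1 := fun k ↦ norm_mobius_lt_one (hs 0) (hs k)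
  calc hypArea n s = hypArea n (fun k ↦ mobius (s 0) (s k)) := (hypArea_mobius (hs 0) hs).symm
    _ ≤ hypArea n r :=
      hmax ⟨hs₀, by simp [mobius], (hypPerimeter_mobius (hs 0) hs).trans hsP⟩
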